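/- For all real t, (1/ρ0(t)²)·∫_{−∞}^t ρ0(s)²·(ρ0(s)⁴ − x0⁴) ds = −(1/4)·x0³·(5 + tanh(x0·t/2)). -/

import Mathlib

/-!
Put `p s = σ (x0 * s) = (1 + tanh (x0 * s / 2)) / 2`, so that `ρ0² = x0² p` and
`p' = x0 p (1 - p)`. The integrand `x0⁶ p (p² - 1)` is then the derivative of
`-(x0⁵ / 2) p (p + 2)`, which vanishes at `-∞`; dividing by `ρ0² = x0² p` leaves
`-(x0³ / 2) (p + 2) = -(x0³ / 4) (5 + tanh (x0 t / 2))`.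
-/

open Real MeasureTheory Set Filter Topology

theorem Real.one_add_tanh_div_two (x : ℝ) : (1 + tanh x) / 2 = sigmoid (2 * x) := by
  have hx : exp x * exp (-x) = 1 := by rw [← exp_add, add_neg_cancel, exp_zero]
  rw [tanh_eq_sinh_div_cosh, sinh_eq, cosh_eq, sigmoid_def, show -(2 * x) = -x + -x by ring,
    exp_add]
  field_simp
  linear_combination 2 * exp (-x) * hx

theorem integrableOn_Iic_deriv_of_nonpos {g g' : ℝ → ℝ} {a l : ℝ}
    (hderiv : ∀ x ∈ Iic a, HasDerivAt g (g' x) x) (g'nonpos : ∀ x ∈ Iic a, g' x ≤ 0)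
    (hg : Tendsto g atBot (𝓝 l)) : IntegrableOn g' (Iic a) := by
  have hIoc : ∀ x ≤ a, IntegrableOn g' (Ioc x a) := fun x hx => by
    have hcont : ContinuousOn g (Icc x a) := fun y hy =>
      (hderiv y hy.2).continuousAt.continuousWithinAt
    simpa using (intervalIntegral.integrableOn_deriv_of_nonneg hcont.neg
      (fun y hy => (hderiv y hy.2.le).neg) fun y hy => neg_nonneg.2 (g'nonpos y hy.2.le)).neg
  refine integrableOn_Iic_of_intervalIntegral_norm_tendsto (l - g a) a (fun x => ?_) tendsto_id ?_
  · rcases le_or_gt x a with hx | hx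
    · exact hIoc x hx
    · simp [Ioc_eq_empty_of_le hx.le]
  refine (hg.sub_const (g a)).congr' ?_
  filter_upwards [Iic_mem_atBot a] with x (hx : x ≤ a)
  calc g x - g a = -∫ y in x..a, g' y := by
        rw [intervalIntegral.integral_eq_sub_of_hasDerivAt_of_le hx
          (fun y hy => (hderiv y hy.2).continuousAt.continuousWithinAt)
          (fun y hy => hderiv y hy.2.le)
          ((intervalIntegrable_iff_integrableOn_Ioc_of_le hx).2 (hIoc x hx))]
        ring
    _ = ∫ y in x..a, ‖g' y‖ := by
        rw [← intervalIntegral.integral_neg]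
        refine intervalIntegral.integral_congr fun y hy => ?_
        rw [uIcc_of_le hx] at hy
        simp [abs_of_nonpos (g'nonpos y hy.2)]

theorem hasDerivAt_sigmoid_mul_sigmoid_add_two (c s : ℝ) :
    HasDerivAt (fun s => -(c ^ 5 / 2) * (sigmoid (c * s) * (sigmoid (c * s) + 2)))
      (c ^ 6 * sigmoid (c * s) * (sigmoid (c * s) ^ 2 - 1)) s := by
  have hp : HasDerivAt (fun s => sigmoid (c * s))
      (sigmoid (c * s) * (1 - sigmoid (c * s)) * c) s :=
    (hasDerivAt_sigmoid (c * s)).comp s (by simpa using (hasDerivAt_id s).const_mul c)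
  exact ((hp.mul (hp.add_const 2)).const_mul (-(c ^ 5 / 2))).congr_deriv (by ring)

theorem stmt_4 (x0 : ℝ) (hx0 : 0 < x0)
    (ρ0 : ℝ → ℝ) (hρ0 : ∀ t, ρ0 t = x0 * Real.sqrt ((1 + Real.tanh (x0 * t / 2)) / 2)) :
    ∀ t : ℝ,
      MeasureTheory.IntegrableOn
        (fun s : ℝ => (ρ0 s) ^ 2 * ((ρ0 s) ^ 4 - x0 ^ 4)) (Set.Iic t) ∧
      (1 / (ρ0 t) ^ 2) * ∫ s in Set.Iic t, (ρ0 s) ^ 2 * ((ρ0 s) ^ 4 - x0 ^ 4)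
        = -(1 / 4) * x0 ^ 3 * (5 + Real.tanh (x0 * t / 2)) := by
  intro t
  have htanh : ∀ s, tanh (x0 * s / 2) = 2 * sigmoid (x0 * s) - 1 := fun s => by
    have h := one_add_tanh_div_two (x0 * s / 2)
    rw [show 2 * (x0 * s / 2) = x0 * s by ring] at h
    linarith
  have hρ : ∀ s, ρ0 s ^ 2 = x0 ^ 2 * sigmoid (x0 * s) := fun s => by
    rw [hρ0, mul_pow, htanh, sq_sqrt (by linarith [sigmoid_pos (x0 * s)])]
    ring
  have hf : ∀ s, ρ0 s ^ 2 * (ρ0 s ^ 4 - x0 ^ 4) =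
      x0 ^ 6 * sigmoid (x0 * s) * (sigmoid (x0 * s) ^ 2 - 1) := fun s => by
    rw [show ρ0 s ^ 4 = (ρ0 s ^ 2) ^ 2 by ring, hρ]
    ring
  simp_rw [hf]
  have hnonpos : ∀ s, x0 ^ 6 * sigmoid (x0 * s) * (sigmoid (x0 * s) ^ 2 - 1) ≤ 0 := fun s =>
    mul_nonpos_of_nonneg_of_nonpos (by have := sigmoid_pos (x0 * s); positivity)
      (by nlinarith [sigmoid_pos (x0 * s), sigmoid_lt_one (x0 * s)])
  have hlim : Tendsto (fun s => -(x0 ^ 5 / 2) * (sigmoid (x0 * s) * (sigmoid (x0 * s) + 2)))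
      atBot (𝓝 0) := by
    have hp := tendsto_sigmoid_atBot.comp (tendsto_id.const_mul_atBot hx0)
    simpa using ((hp.mul (hp.add_const 2)).const_mul (-(x0 ^ 5 / 2)))
  have hderiv (s : ℝ) (_ : s ∈ Iic t) := hasDerivAt_sigmoid_mul_sigmoid_add_two x0 s
  have hint := integrableOn_Iic_deriv_of_nonpos hderiv (fun s _ => hnonpos s) hlim
  refine ⟨hint, ?_⟩
  rw [integral_Iic_of_hasDerivAt_of_tendsto' hderiv hint hlim, hρ, htanh]
  have hp := sigmoid_pos (x0 * t)
  field_simp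
  ring
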